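/- arXiv:0907.4559 — 3 statements merged into one kernel-verified Lean document; each statement's English description precedes it below -/
import Mathlib

section
/- Let R be a commutative ring of characteristic p > 0 with a Hasse–Schmidt derivation ∂. Then for every x ∈ R and every n ∈ ℕ: if p divides n, then ∂ₙ(xᵖ) = (∂_{n/p}(x))ᵖ, and if p does not divide n, then ∂ₙ(xᵖ) = 0. -/
/-!
Since `D_∂` is a ring homomorphism, `D_∂(xᵖ) = D_∂(x)ᵖ`, and in characteristic `p` the `p`-th power
of a power series `∑ aᵢ εⁱ` is `∑ aᵢᵖ εᵖⁱ`; comparing coefficients gives both cases.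
-/

namespace PowerSeries

variable {R : Type*} [CommRing R] (p : ℕ) [ExpChar R p]

theorem map_frobenius_expand (φ : PowerSeries R) :
    (φ.expand p (expChar_ne_zero R p)).map (frobenius R p) = φ ^ p :=
  MvPowerSeries.map_frobenius_expand p _

theorem coeff_pow_expChar (φ : PowerSeries R) (n : ℕ) :
    coeff n (φ ^ p) = if p ∣ n then coeff (n / p) φ ^ p else 0 := by
  rw [← map_frobenius_expand, coeff_map, coeff_expand, apply_ite (frobenius R p), map_zero,
    frobenius_def]

end PowerSeries

theorem hasseSchmidt_frobenius_general (R : Type) [CommRing R] (p : ℕ)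
    [Fact p.Prime] [CharP R p] (d : ℕ → R → R)
    (f : R →+* PowerSeries R) (hf : ∀ a, f a = PowerSeries.mk fun i => d i a) :
    ∀ (x : R) (n : ℕ),
      (p ∣ n → d n (x ^ p) = (d (n / p) x) ^ p) ∧ (¬ p ∣ n → d n (x ^ p) = 0) := by
  intro x n
  have hd : ∀ a i, d i a = PowerSeries.coeff i (f a) := fun a i => by
    rw [hf, PowerSeries.coeff_mk]
  rw [hd, hd, map_pow, PowerSeries.coeff_pow_expChar]
  exact ⟨fun h => if_pos h, fun h => if_neg h⟩

/-- For a Hasse–Schmidt derivation on a commutative ring of characteristic `p > 0`: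
`∂ₙ(xᵖ) = (∂_{n/p}(x))ᵖ` if `p ∣ n`, and `∂ₙ(xᵖ) = 0` otherwise. -/
theorem hasseSchmidt_frobenius (R : Type) [CommRing R] (p : ℕ)
    [Fact p.Prime] [CharP R p] (d : ℕ → R → R)
    (f : R →+* PowerSeries R) (hf : ∀ a, f a = PowerSeries.mk fun i => d i a)
    (h0 : ∀ x, d 0 x = x) :
    ∀ (x : R) (n : ℕ),
      (p ∣ n → d n (x ^ p) = (d (n / p) x) ^ p) ∧ (¬ p ∣ n → d n (x ^ p) = 0) :=
  hasseSchmidt_frobenius_general R p d f hf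
end

section
/- Let K be a field of characteristic p > 0 with a Hasse–Schmidt derivation ∂ and constants C_K. If x ∈ K satisfies xᵖ ∈ C_K, then x ∈ C_K. In other words, the field of constants is closed under taking p-th roots within K. -/
/-! In characteristic `p` the `p`-th power of a power series is its Frobenius twist expanded by
`ε ↦ εᵖ`, so comparing coefficients of `εᵖⁱ` in `∂(xᵖ) = (∂x)ᵖ` gives `∂ₚᵢ(xᵖ) = (∂ᵢx)ᵖ`;
since `K` is reduced, `∂ᵢx = 0` whenever `∂ₚᵢ(xᵖ) = 0`. -/

open PowerSeries

theorem PowerSeries.coeff_mul_pow_expChar {R : Type*} [CommRing R] (p : ℕ) [ExpChar R p]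
    (φ : PowerSeries R) (n : ℕ) : coeff (p * n) (φ ^ p) = coeff n φ ^ p := by
  have hp : p ≠ 0 := expChar_ne_zero R p
  have hfrob : map (frobenius R p) (expand p hp φ) = φ ^ p :=
    MvPowerSeries.map_frobenius_expand p hp
  rw [← hfrob, coeff_map, coeff_expand_mul, frobenius_def]

theorem hasseSchmidt_constants_pth_root_general (K : Type) [Field K] (p : ℕ)
    [Fact p.Prime] [CharP K p] (d : ℕ → K → K)
    (f : K →+* PowerSeries K) (hf : ∀ a, f a = PowerSeries.mk fun i => d i a) :
    ∀ x : K, (∀ i, 1 ≤ i → d i (x ^ p) = 0) → ∀ i, 1 ≤ i → d i x = 0 := by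
  intro x hx i hi
  have hp : 0 < p := (Fact.out : p.Prime).pos
  have hpow : d i x ^ p = d (p * i) (x ^ p) := by
    simpa only [hf, coeff_mk] using
      (coeff_mul_pow_expChar p (f x) i).symm.trans (congrArg (coeff (p * i)) (map_pow f x p).symm)
  have hzero : d i x ^ p = 0 := hpow ▸ hx (p * i) (Nat.one_le_iff_ne_zero.mpr (by positivity))
  exact pow_eq_zero_iff hp.ne' |>.mp hzero

/-- For a Hasse–Schmidt derivation on a field `K` of characteristic `p > 0`, the field of
constants is closed under `p`-th roots within `K`: if `xᵖ` is a constant then so is `x`. -/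
theorem hasseSchmidt_constants_pth_root (K : Type) [Field K] (p : ℕ)
    [Fact p.Prime] [CharP K p] (d : ℕ → K → K)
    (f : K →+* PowerSeries K) (hf : ∀ a, f a = PowerSeries.mk fun i => d i a)
    (h0 : ∀ x, d 0 x = x) :
    ∀ x : K, (∀ i, 1 ≤ i → d i (x ^ p) = 0) → ∀ i, 1 ≤ i → d i x = 0 :=
  hasseSchmidt_constants_pth_root_general K p d f hf
end

section
/- Let p be a prime, let ∂ be an iterative Hasse–Schmidt derivation on a ring R of characteristic p, and let n ∈ ℕ have base-p expansion n = Σ_k n_k p^k with each 0 ≤ n_k < p. Then ∂ₙ = Π_k (1/n_k!)·(∂_{p^k})^{n_k}, where the product denotes composition of maps and each n_k! is invertible in R. -/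
section Aux

variable {R : Type} [CommRing R] {p : ℕ} [Fact p.Prime]

/-- `C(t * p^k, p^k) ≡ t [MOD p]` (a special case of Lucas's theorem). -/
lemma lucas_mul_pow_choose (k t : ℕ) :
    (t * p ^ k).choose (p ^ k) ≡ t [MOD p] := by
  induction k generalizing t with
  | zero => simpa using Nat.ModEq.refl t
  | succ k ih =>
      have hp : p.Prime := Fact.out
      have hppos : 0 < p := hp.pos
      have h := Choose.choose_modEq_choose_mod_mul_choose_div_nat
        (p := p) (n := t * p ^ (k + 1)) (k := p ^ (k + 1))
      have h1 : (t * p ^ (k + 1)) % p = 0 := by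
        have : p ∣ t * p ^ (k + 1) := Dvd.dvd.mul_left (dvd_pow_self p k.succ_ne_zero) t
        omega
      have h2 : (p ^ (k + 1)) % p = 0 := by
        have : p ∣ p ^ (k + 1) := dvd_pow_self p k.succ_ne_zero
        omega
      have h3 : t * p ^ (k + 1) / p = t * p ^ k := by
        rw [pow_succ, ← mul_assoc, Nat.mul_div_cancel _ hppos]
      have h4 : p ^ (k + 1) / p = p ^ k := by
        rw [pow_succ, Nat.mul_div_cancel _ hppos]
      rw [h1, h2, h3, h4] at h
      simp only [Nat.choose_self, one_mul] at h
      exact h.trans (ih t)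

end Aux

/-- For an iterative Hasse–Schmidt derivation on a commutative ring `R` of prime
characteristic `p`, if `n = Σ n_k p^k` is the base-`p` expansion of `n`, then each `n_k!`
is invertible in `R` and `∂ₙ = Π_k (1/n_k!) (∂_{p^k})^{n_k}` (composition of maps). -/
theorem iterative_hasseSchmidt_digit_decomposition (R : Type) [CommRing R] (p : ℕ)
    [Fact p.Prime] [CharP R p] (d : ℕ → R → R)
    (f : R →+* PowerSeries R) (hf : ∀ a, f a = PowerSeries.mk fun i => d i a)
    (h0 : ∀ x, d 0 x = x)
    (hiter : ∀ i j x, d i (d j x) = ((i + j).choose i : R) * d (i + j) x)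
    (n : ℕ) :
    (∀ k < (Nat.digits p n).length,
        IsUnit ((((Nat.digits p n).getD k 0).factorial : R))) ∧
    ∀ x : R,
      (∏ k ∈ Finset.range (Nat.digits p n).length,
          ((((Nat.digits p n).getD k 0).factorial : R))) * d n x =
        ((List.range (Nat.digits p n).length).foldr
          (fun k g => (d (p ^ k))^[(Nat.digits p n).getD k 0] ∘ g) id) x := by
  have hp : p.Prime := Fact.out
  -- factorials of numbers < p are units in R
  have unit_fact : ∀ m : ℕ, m < p → IsUnit ((m.factorial : R)) := by
    intro m hm
    have h1 : ((m.factorial : ZMod p)) ≠ 0 := by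
      rw [Ne, ZMod.natCast_eq_zero_iff]
      intro h
      exact absurd (hp.dvd_factorial.mp h) (by omega)
    have h2 := (isUnit_iff_ne_zero.mpr h1).map (ZMod.castHom dvd_rfl R)
    simpa using h2
  -- d i is ℕ-linear
  have hcoeff : ∀ (y : R) (i : ℕ), d i y = PowerSeries.coeff i (f y) := by
    intro y i; rw [hf]; simp
  have hdnat : ∀ (N : ℕ) (i : ℕ) (y : R), d i ((N : R) * y) = (N : R) * d i y := by
    intro N i y
    rw [hcoeff, hcoeff, map_mul, map_natCast f, ← map_natCast (PowerSeries.C (R := R)),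
      PowerSeries.coeff_C_mul]
  have hdnat_iter : ∀ (N i a : ℕ) (y : R),
      (d i)^[a] ((N : R) * y) = (N : R) * (d i)^[a] y := by
    intro N i a y
    induction a generalizing y with
    | zero => simp
    | succ a ih => rw [Function.iterate_succ_apply, hdnat, ih, Function.iterate_succ_apply]
  -- Lucas in R
  have lucasR : ∀ (a M k : ℕ), a + 1 < p →
      (((p ^ k + (p ^ (k + 1) * M + a * p ^ k)).choose (p ^ k) : R)) = ((a + 1 : ℕ) : R) := by
    intro a M k ha
    have hidx : p ^ k + (p ^ (k + 1) * M + a * p ^ k) = (a + 1 + p * M) * p ^ k := by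
      rw [pow_succ]; ring
    rw [hidx, (CharP.natCast_eq_natCast R p)]
    refine (lucas_mul_pow_choose k (a + 1 + p * M)).trans ?_
    simp [Nat.ModEq, Nat.add_mul_mod_self_left, Nat.mod_eq_of_lt ha]
  -- iterating d (p^k) on a "high" term picks up a factorial
  have hB : ∀ (k a : ℕ), a < p → ∀ (M : ℕ) (x : R),
      (d (p ^ k))^[a] (d (p ^ (k + 1) * M) x)
        = ((a.factorial : ℕ) : R) * d (p ^ (k + 1) * M + a * p ^ k) x := by
    intro k a
    induction a with
    | zero => intro _ M x; simp
    | succ a ih =>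
        intro ha M x
        rw [Function.iterate_succ_apply', ih (by omega), hdnat,
          hiter (p ^ k) (p ^ (k + 1) * M + a * p ^ k) x, lucasR a M k ha]
        have hidx : p ^ k + (p ^ (k + 1) * M + a * p ^ k)
            = p ^ (k + 1) * M + (a + 1) * p ^ k := by ring
        rw [hidx, Nat.factorial_succ]
        push_cast
        ring
  -- main induction over the digit list
  have hmain : ∀ l : List ℕ, (∀ e ∈ l, e < p) → ∀ (k0 : ℕ) (x : R),
      (List.range l.length).foldr
          (fun k g => (d (p ^ (k0 + k)))^[l.getD k 0] ∘ g) id x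
        = (∏ k ∈ Finset.range l.length, ((l.getD k 0).factorial : R)) *
            d (p ^ k0 * Nat.ofDigits p l) x := by
    intro l
    induction l with
    | nil => intro _ k0 x; simp [h0]
    | cons a l ih =>
        intro hl k0 x
        rw [List.length_cons, List.range_succ_eq_map, List.foldr_cons, List.foldr_map]
        simp only [List.getD_cons_zero, List.getD_cons_succ, Function.comp_apply,
          Nat.add_succ, Nat.succ_add, Nat.add_zero]
        have hl' : ∀ e ∈ l, e < p := fun e he => hl e (List.mem_cons_of_mem a he)
        have ihh := ih hl' (k0 + 1) x
        simp only [Nat.add_succ, Nat.succ_add, Nat.add_zero] at ihh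
        rw [ihh]
        rw [show (∏ k ∈ Finset.range l.length, ((l.getD k 0).factorial : R))
            = (((∏ k ∈ Finset.range l.length, (l.getD k 0).factorial : ℕ)) : R) by
            push_cast; rfl]
        rw [hdnat_iter, hB k0 a (hl a (List.mem_cons_self (a := a) (l := l))) (Nat.ofDigits p l) x]
        have hidx : p ^ (k0 + 1) * Nat.ofDigits p l + a * p ^ k0
            = p ^ k0 * Nat.ofDigits p (a :: l) := by
          rw [Nat.ofDigits_cons, pow_succ]
          ring
        rw [hidx, Finset.prod_range_succ']
        simp only [List.getD_cons_zero, List.getD_cons_succ]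
        push_cast
        ring
  constructor
  · intro k hk
    apply unit_fact
    rw [List.getD_eq_getElem _ _ hk]
    exact Nat.digits_lt_base hp.two_le (List.getElem_mem hk)
  · intro x
    have hd : ∀ e ∈ Nat.digits p n, e < p := fun e he => Nat.digits_lt_base hp.two_le he
    have h := hmain (Nat.digits p n) hd 0 x
    simp only [Nat.zero_add, pow_zero, one_mul, Nat.ofDigits_digits] at h
    exact h.symm
end
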